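/- Let G be a simple graph on a finite vertex type with G.IsSRGWith n k 0 1 and 2 ≤ n (a strongly regular Moore graph, of girth 5). Then E(G) = E(Gᶜ) if and only if n = 5 and k = 2 (i.e. G is the pentagon C₅). -/

import Mathlib

/-!
The adjacency matrix `A` of a Moore graph satisfies `A² + A - (k - 1) = J`, and that of its
complement satisfies `B² + B - (k - 1) = (k - 1)² J`. For a `d`-regular graph with
`M² + M - c = m J` every eigenvalue is a root of `(x - d)(x² + x - c)`, and on these three roots
`|x| √(4c + 1)` agrees with a quadratic polynomial. Summing it over the spectrum with
`tr M = 0` and `tr (M² + M - c) = m N = d² + d - c` gives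
`E · √(4c + 1) = d (√(4c + 1) + 1) + 2c (N - 1)`, which depends on the graph only through `d`.
So `E(G) = E(Gᶜ)` exactly when `k = k² - k`.
-/

open Finset

/-- The adjacency matrix of a simple graph over `ℝ` is Hermitian. -/
lemma adjMatrix_isHermitian {V : Type*} [Fintype V] (G : SimpleGraph V) [DecidableRel G.Adj] :
    (G.adjMatrix ℝ).IsHermitian := by
  rw [Matrix.IsHermitian, Matrix.conjTranspose_eq_transpose_of_trivial]
  exact G.isSymm_adjMatrix

/-- The eigenvalues (with multiplicity) of the real adjacency matrix of a simple graph. -/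
noncomputable def adjEig {V : Type*} [Fintype V] [DecidableEq V] (G : SimpleGraph V) : V → ℝ := by
  classical
  exact (adjMatrix_isHermitian G).eigenvalues

/-- The energy of a graph : the sum of the absolute values of its adjacency eigenvalues. -/
noncomputable def energy {V : Type*} [Fintype V] [DecidableEq V] (G : SimpleGraph V) : ℝ :=
  ∑ i, |adjEig G i|

/-- The characteristic polynomial of the real adjacency matrix of a simple graph. -/
noncomputable def charpolyOf {V : Type*} [Fintype V] [DecidableEq V] (G : SimpleGraph V) :
    Polynomial ℝ := by
  classical
  exact (G.adjMatrix ℝ).charpoly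

open Polynomial Matrix

namespace Matrix.IsHermitian

variable {n : Type*} [Fintype n] [DecidableEq n] {A : Matrix n n ℝ}

lemma aeval_eq_conj_diagonal (hA : A.IsHermitian) (p : ℝ[X]) :
    aeval A p = Unitary.conjStarAlgAut ℝ _ hA.eigenvectorUnitary
      (diagonal fun i => p.eval (hA.eigenvalues i)) := by
  conv_lhs => rw [hA.spectral_theorem]
  rw [← StarAlgEquiv.coe_toAlgEquiv, aeval_algEquiv, AlgHom.comp_apply]
  have : diagonal (RCLike.ofReal ∘ hA.eigenvalues) = diagonalAlgHom ℝ hA.eigenvalues := rfl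
  rw [this, aeval_algHom_apply, aeval_pi_apply]
  rfl

lemma trace_aeval (hA : A.IsHermitian) (p : ℝ[X]) :
    (aeval A p).trace = ∑ i, p.eval (hA.eigenvalues i) := by
  rw [hA.aeval_eq_conj_diagonal, Unitary.conjStarAlgAut_apply, trace_mul_cycle,
    Unitary.coe_star_mul_self, one_mul, trace_diagonal]

lemma eval_eigenvalues_eq_zero (hA : A.IsHermitian) {p : ℝ[X]} (hp : aeval A p = 0) (i : n) :
    p.eval (hA.eigenvalues i) = 0 := by
  rw [hA.aeval_eq_conj_diagonal, EmbeddingLike.map_eq_zero_iff] at hp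
  exact congrFun (diagonal_eq_zero.mp hp) i

end Matrix.IsHermitian

lemma Matrix.of_one_mul_of_one {n α : Type*} [Fintype n] [NonAssocSemiring α] :
    (of 1 : Matrix n n α) * of 1 = (Fintype.card n : α) • of 1 := by
  ext i j
  simp [mul_apply]

lemma Matrix.trace_of_one {n α : Type*} [Fintype n] [AddCommMonoidWithOne α] :
    (of 1 : Matrix n n α).trace = Fintype.card n := by
  simp [trace]

lemma abs_mul_sqrt_eq_of_sq_add_self_eq {c μ : ℝ} (hc : 0 ≤ c) (hμ : μ ^ 2 + μ = c) :
    |μ| * √(4 * c + 1) = 2 * c - μ := by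
  have ht : √(4 * c + 1) = |2 * μ + 1| := by
    rw [← Real.sqrt_sq_eq_abs, ← hμ]; ring_nf
  rw [ht, ← abs_mul, show μ * (2 * μ + 1) = 2 * c - μ by rw [← hμ]; ring]
  exact abs_of_nonneg (by nlinarith [sq_nonneg μ])

lemma mul_sqrt_add_sub_eq_zero_of_sq_add_sub_eq_zero {c d : ℝ} (hc : 0 ≤ c) (hd : 0 ≤ d)
    (h : d ^ 2 + d - c = 0) : d * √(4 * c + 1) + d - 2 * c = 0 := by
  have := abs_mul_sqrt_eq_of_sq_add_self_eq hc (by linarith : d ^ 2 + d = c)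
  rw [abs_of_nonneg hd] at this
  linarith

/-- The right-hand side is the quadratic interpolating `|x| √(4c + 1)` at `d` and at the roots of
`x² + x - c`. If `d² + d = c`, its leading coefficient `d √(4c + 1) + d - 2c` vanishes, so the
division by zero is harmless. -/
lemma abs_mul_sqrt_eq_of_cubic_eq_zero {c d μ : ℝ} (hc : 0 ≤ c) (hd : 0 ≤ d)
    (hμ : (μ - d) * (μ ^ 2 + μ - c) = 0) :
    |μ| * √(4 * c + 1) =
      2 * c - μ + (d * √(4 * c + 1) + d - 2 * c) * (μ ^ 2 + μ - c) / (d ^ 2 + d - c) := by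
  rcases mul_eq_zero.mp hμ with hμd | hμq
  · obtain rfl : μ = d := sub_eq_zero.mp hμd
    rw [mul_div_cancel_of_imp (mul_sqrt_add_sub_eq_zero_of_sq_add_sub_eq_zero hc hd),
      abs_of_nonneg hd]
    ring
  · rw [hμq, mul_zero, zero_div, add_zero]
    exact abs_mul_sqrt_eq_of_sq_add_self_eq hc (by linarith)

namespace SimpleGraph

variable {V : Type*} {H : SimpleGraph V} [DecidableRel H.Adj]

lemma adjMatrix_compl_eq [DecidableEq V] {α : Type*} [AddCommGroup α] [One α] [DecidableEq α] :
    Hᶜ.adjMatrix α = of 1 - 1 - H.adjMatrix α := by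
  rw [← compl_adjMatrix_eq_adjMatrix_compl,
    ← one_add_adjMatrix_add_compl_adjMatrix_eq_of_one (G := H) (α := α)]
  abel

variable [Fintype V]

lemma IsRegularOfDegree.adjMatrix_mul_of_one {α : Type*} [NonAssocSemiring α] {d : ℕ}
    (hH : H.IsRegularOfDegree d) : H.adjMatrix α * of 1 = (d : α) • of 1 := by
  ext i j
  simp [adjMatrix_mul_apply, hH i]

lemma IsRegularOfDegree.of_one_mul_adjMatrix {α : Type*} [NonAssocSemiring α] {d : ℕ}
    (hH : H.IsRegularOfDegree d) : of 1 * H.adjMatrix α = (d : α) • of 1 := by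
  ext i j
  simp [mul_adjMatrix_apply, hH j]

variable [DecidableEq V]

lemma energy_eq_sum_abs_eigenvalues :
    energy H = ∑ i, |(adjMatrix_isHermitian H).eigenvalues i| := by
  unfold energy adjEig
  congr!

lemma IsRegularOfDegree.compl_adjMatrix_sq_add_adjMatrix {d : ℕ} {c m : ℝ}
    (hH : H.IsRegularOfDegree d) (hA : H.adjMatrix ℝ ^ 2 + H.adjMatrix ℝ - c • 1 = m • of 1) :
    Hᶜ.adjMatrix ℝ ^ 2 + Hᶜ.adjMatrix ℝ - c • 1 =
      ((Fintype.card V : ℝ) - 1 - 2 * d + m) • of 1 := by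
  have hA' : H.adjMatrix ℝ * H.adjMatrix ℝ = m • of 1 - H.adjMatrix ℝ + c • 1 := by
    rw [← hA]; noncomm_ring
  rw [adjMatrix_compl_eq, sq]
  simp only [sub_mul, mul_sub, one_mul, mul_one, hA', hH.adjMatrix_mul_of_one,
    hH.of_one_mul_adjMatrix, of_one_mul_of_one]
  module

lemma IsSRGWith.adjMatrix_sq_add_adjMatrix {G : SimpleGraph V} [DecidableRel G.Adj] {n k : ℕ}
    (h : G.IsSRGWith n k 0 1) :
    G.adjMatrix ℝ ^ 2 + G.adjMatrix ℝ - ((k : ℝ) - 1) • 1 = (1 : ℝ) • of 1 := by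
  rw [h.matrix_eq, adjMatrix_compl_eq, zero_smul, one_smul, add_zero, ← Nat.cast_smul_eq_nsmul ℝ]
  module

variable [Nonempty V] {d : ℕ} {c m : ℝ}

lemma IsRegularOfDegree.sq_add_sub_eq_mul_card (hH : H.IsRegularOfDegree d)
    (hA : H.adjMatrix ℝ ^ 2 + H.adjMatrix ℝ - c • 1 = m • of 1) :
    (d : ℝ) ^ 2 + d - c = m * Fintype.card V := by
  have hJ : (of 1 : Matrix V V ℝ) ≠ 0 := fun h => by
    obtain ⟨v⟩ := ‹Nonempty V›
    simpa using congrFun (congrFun h v) v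
  apply smul_left_injective ℝ hJ
  have := congrArg (· * (of 1 : Matrix V V ℝ)) hA
  simp only [sq, add_mul, sub_mul, mul_assoc, hH.adjMatrix_mul_of_one, mul_smul_comm,
    smul_mul_assoc, one_mul, of_one_mul_of_one] at this
  simp only [smul_smul] at this ⊢
  rw [← this]
  module

theorem IsRegularOfDegree.energy_mul_sqrt (hH : H.IsRegularOfDegree d) (hc : 0 ≤ c)
    (hA : H.adjMatrix ℝ ^ 2 + H.adjMatrix ℝ - c • 1 = m • of 1) :
    energy H * √(4 * c + 1) = d * (√(4 * c + 1) + 1) + 2 * c * (Fintype.card V - 1) := by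
  set t := √(4 * c + 1)
  have hA' := adjMatrix_isHermitian H
  set μ := hA'.eigenvalues
  have hcubic :
      (H.adjMatrix ℝ - (d : ℝ) • 1) * (H.adjMatrix ℝ ^ 2 + H.adjMatrix ℝ - c • 1) = 0 := by
    rw [hA, mul_smul_comm, sub_mul, hH.adjMatrix_mul_of_one, smul_one_mul, sub_self, smul_zero]
  have hμ : ∀ i, (μ i - d) * (μ i ^ 2 + μ i - c) = 0 := fun i => by
    have := hA'.eval_eigenvalues_eq_zero (p := (X - C (d : ℝ)) * (X ^ 2 + X - C c))
      (by simpa only [map_mul, map_sub, map_add, map_pow, aeval_X, aeval_C,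
        Algebra.algebraMap_eq_smul_one] using hcubic) i
    simp only [eval_mul, eval_sub, eval_X, eval_C, eval_add, eval_pow] at this
    exact this
  set e := (d * t + d - 2 * c) / (d ^ 2 + d - c)
  calc energy H * t = ∑ i, (C (2 * c) - X + C e * (X ^ 2 + X - C c)).eval (μ i) := by
        rw [energy_eq_sum_abs_eigenvalues, Finset.sum_mul]
        refine Finset.sum_congr rfl fun i _ => ?_
        rw [abs_mul_sqrt_eq_of_cubic_eq_zero hc (Nat.cast_nonneg d) (hμ i)]
        simp only [eval_add, eval_sub, eval_mul, eval_C, eval_X, eval_pow, e]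
        ring
    _ = ((2 * c) • 1 - H.adjMatrix ℝ + e • m • of 1 : Matrix V V ℝ).trace := by
        rw [← hA'.trace_aeval, ← hA]
        simp only [map_add, map_sub, map_mul, map_pow, aeval_X, aeval_C,
          Algebra.algebraMap_eq_smul_one, smul_one_mul]
        congr 1
        module
    _ = 2 * c * Fintype.card V + e * (m * Fintype.card V) := by
        rw [trace_add, trace_sub, trace_smul, trace_smul, trace_smul, trace_one, trace_adjMatrix,
          trace_of_one]
        simp only [smul_eq_mul, sub_zero]
    _ = _ := by
        rw [← hH.sq_add_sub_eq_mul_card hA, div_mul_cancel_of_imp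
          (mul_sqrt_add_sub_eq_zero_of_sq_add_sub_eq_zero hc (Nat.cast_nonneg d))]
        ring

end SimpleGraph

/-- A strongly regular Moore graph `srg(n,k,0,1)` with `n ≥ 2` is
equienergetic with its complement iff it is the pentagon, i.e. `n = 5` and `k = 2`. -/
theorem moore_graph_equienergetic_iff {V : Type*} [Fintype V] [DecidableEq V]
    (G : SimpleGraph V) [DecidableRel G.Adj] (n k : ℕ)
    (h : G.IsSRGWith n k 0 1) (hn : 2 ≤ n) :
    energy G = energy Gᶜ ↔ (n = 5 ∧ k = 2) := by
  have hparam : k * (k - 1) = n - k - 1 := by simpa using h.param_eq G (by omega)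
  have hk : 0 < k := Nat.pos_of_ne_zero (by rintro rfl; omega)
  have : Nonempty V := Fintype.card_pos_iff.mp (by rw [h.card]; omega)
  have hc : (0 : ℝ) ≤ k - 1 := by
    have : (1 : ℝ) ≤ k := by exact_mod_cast hk
    linarith
  have hAG := h.adjMatrix_sq_add_adjMatrix
  have hEG := h.regular.energy_mul_sqrt hc hAG
  have hEC := h.regular.compl.energy_mul_sqrt hc (h.regular.compl_adjMatrix_sq_add_adjMatrix hAG)
  have ht : 0 < √(4 * ((k : ℝ) - 1) + 1) := Real.sqrt_pos.mpr (by linarith)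
  rw [← mul_left_inj' ht.ne', hEG, hEC, add_left_inj, mul_left_inj' (by positivity),
    Nat.cast_inj, h.card]
  constructor
  · intro hk'
    have : k * (k - 1) = k * 1 := by omega
    have := Nat.eq_of_mul_eq_mul_left hk this
    omega
  · rintro ⟨rfl, rfl⟩
    rfl
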